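/- arXiv:0709.1235 — 6 statements merged into one kernel-verified Lean document; each statement's English description precedes it below -/
import Mathlib

section
/- Let 0 < α ≤ ∞ and let f be a real function on (-α,α). If f[A] ≥ f[B] holds for all symmetric 2×2 real matrices A, B with entries in (-α,α) satisfying A ≥ B (with no positivity assumption on B), then f is affine on (-α,α), i.e., there exist real constants c, d with f(x) = cx + d for all x ∈ (-α,α). -/
/-!
Testing `f[A] ≥ f[B]` on `A = !![x, y; y, x]` and `B = !![x', y'; y', x']`, whose difference is
positive semidefinite iff `|y - y'| ≤ x - x'`, gives `|f y - f y'| ≤ f x - f x'` in that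
situation. Taking `y = x`, `y' = x'` shows that `f` is monotone; taking `x - x' = y - y' = d`
shows that the increment `f (u + d) - f u` does not depend on `u`, so `g = f - f 0` solves
Cauchy's equation locally. A monotone local solution is linear: `g (y / n) = g y / n`, and
squeezing `g x` between consecutive multiples of `g (y / n)` gives
`|g x - g y / y * x| ≤ g y / n`.
-/

open Matrix

/-- `x` lies in the open interval `(-a, a)`, where `a ∈ (0, ∞]` is an extended real. -/
def MemI (a : EReal) (x : ℝ) : Prop := -a < (x : EReal) ∧ (x : EReal) < a

/-- `x` lies in the open interval `(0, a)`. -/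
def MemP (a : EReal) (x : ℝ) : Prop := 0 < x ∧ (x : EReal) < a

/-- All entries of the matrix `A` lie in `(-a, a)`. -/
def EntriesIn (a : EReal) {n : ℕ} (A : Matrix (Fin n) (Fin n) ℝ) : Prop :=
  ∀ i j, MemI a (A i j)

/-- `f` is S-positive (Schur positive) of order `n` on `(-a, a)`. -/
def SPos (a : EReal) (f : ℝ → ℝ) (n : ℕ) : Prop :=
  ∀ A : Matrix (Fin n) (Fin n) ℝ, EntriesIn a A → A.PosSemidef → (A.map f).PosSemidef

/-- `f` is S-monotone (Schur monotone) of order `n` on `(-a, a)`. -/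
def SMono (a : EReal) (f : ℝ → ℝ) (n : ℕ) : Prop :=
  ∀ A B : Matrix (Fin n) (Fin n) ℝ, A.IsSymm → B.IsSymm →
    EntriesIn a A → EntriesIn a B →
    B.PosSemidef → (A - B).PosSemidef →
    (A.map f - B.map f).PosSemidef

/-- `f` is S-convex (Schur convex) of order `n` on `(-a, a)`. -/
def SConv (a : EReal) (f : ℝ → ℝ) (n : ℕ) : Prop :=
  ∀ A B : Matrix (Fin n) (Fin n) ℝ, A.IsSymm → B.IsSymm →
    EntriesIn a A → EntriesIn a B →
    B.PosSemidef → (A - B).PosSemidef →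
    ∀ t : ℝ, 0 ≤ t → t ≤ 1 →
    (t • A.map f + (1 - t) • B.map f - (t • A + (1 - t) • B).map f).PosSemidef

open Set

theorem memI_iff_abs_lt {a : EReal} {x : ℝ} : MemI a x ↔ ((|x| : ℝ) : EReal) < a := by
  rw [MemI, EReal.neg_lt_comm, abs_eq_max_neg, EReal.coe_strictMono.monotone.map_max, max_lt_iff,
    EReal.coe_neg, and_comm]

theorem MemI.of_abs_le {a : EReal} {x y : ℝ} (hy : MemI a y) (hxy : |x| ≤ |y|) : MemI a x :=
  memI_iff_abs_lt.2 <| (EReal.coe_le_coe_iff.2 hxy).trans_lt (memI_iff_abs_lt.1 hy)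

theorem exists_pos_memI {a : EReal} (ha : 0 < a) : ∃ b : ℝ, 0 < b ∧ MemI a b := by
  obtain ⟨b, hb0, hba⟩ := EReal.lt_iff_exists_real_btwn.1 ha
  have hb0 : 0 < b := by exact_mod_cast hb0
  exact ⟨b, hb0, memI_iff_abs_lt.2 (by rwa [abs_of_pos hb0])⟩

theorem memI_zero {a : EReal} (ha : 0 < a) : MemI a 0 :=
  memI_iff_abs_lt.2 (by simpa using ha)

theorem posSemidef_circulant_two_iff {p q : ℝ} :
    (!![p, q; q, p] : Matrix (Fin 2) (Fin 2) ℝ).PosSemidef ↔ |q| ≤ p := by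
  have hform (v : Fin 2 → ℝ) :
      star v ⬝ᵥ (!![p, q; q, p] *ᵥ v) = p * (v 0 ^ 2 + v 1 ^ 2) + 2 * q * (v 0 * v 1) := by
    simp only [dotProduct, Pi.star_apply, star_trivial, mulVec, of_apply, cons_val', cons_val_fin_one,
      Fin.sum_univ_two, cons_val_zero, cons_val_one]
    ring
  rw [Matrix.posSemidef_iff_dotProduct_mulVec]
  constructor
  · rintro ⟨-, h⟩
    have h₁ := hform ![1, 1] ▸ h ![1, 1]
    have h₂ := hform ![1, -1] ▸ h ![1, -1]
    norm_num at h₁ h₂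
    exact abs_le.2 ⟨by linarith, by linarith⟩
  · intro h
    refine ⟨?_, fun v => ?_⟩
    · ext i j; fin_cases i <;> fin_cases j <;> rfl
    · rcases abs_le.1 h with ⟨h₁, h₂⟩
      rw [hform]
      nlinarith [sq_nonneg (v 0 + v 1), sq_nonneg (v 0 - v 1)]

def SMonoTwo (a : EReal) (f : ℝ → ℝ) : Prop :=
  ∀ A B : Matrix (Fin 2) (Fin 2) ℝ, A.IsSymm → B.IsSymm →
    EntriesIn a A → EntriesIn a B → (A - B).PosSemidef → (A.map f - B.map f).PosSemidef

namespace SMonoTwo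

variable {a : EReal} {f : ℝ → ℝ}

theorem abs_sub_le (hf : SMonoTwo a f) {x x' y y' : ℝ} (hx : MemI a x) (hx' : MemI a x')
    (hy : MemI a y) (hy' : MemI a y') (h : |y - y'| ≤ x - x') : |f y - f y'| ≤ f x - f x' := by
  have hsymm (p q : ℝ) : (!![p, q; q, p] : Matrix (Fin 2) (Fin 2) ℝ).IsSymm := by
    ext i j; fin_cases i <;> fin_cases j <;> rfl
  have hsub (p q p' q' : ℝ) : (!![p, q; q, p] - !![p', q'; q', p'] : Matrix (Fin 2) (Fin 2) ℝ) =
      !![p - p', q - q'; q - q', p - p'] := by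
    ext i j; fin_cases i <;> fin_cases j <;> rfl
  have hmap (p q : ℝ) :
      (!![p, q; q, p] : Matrix (Fin 2) (Fin 2) ℝ).map f = !![f p, f q; f q, f p] := by
    ext i j; fin_cases i <;> fin_cases j <;> rfl
  have key := hf !![x, y; y, x] !![x', y'; y', x'] (hsymm x y) (hsymm x' y')
    (fun i j => by fin_cases i <;> fin_cases j <;> assumption)
    (fun i j => by fin_cases i <;> fin_cases j <;> assumption)
    (by rw [hsub]; exact posSemidef_circulant_two_iff.2 h)
  rwa [hmap, hmap, hsub, posSemidef_circulant_two_iff] at key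

theorem monotoneOn (hf : SMonoTwo a f) : MonotoneOn f {x | MemI a x} := fun x hx y hy hxy =>
  sub_nonneg.1 <| (abs_nonneg _).trans <|
    hf.abs_sub_le hy hx hy hx (by rw [abs_of_nonneg (sub_nonneg.2 hxy)])

theorem sub_shift_eq (hf : SMonoTwo a f) {u w d : ℝ} (hu : MemI a u) (hw : MemI a w)
    (hud : MemI a (u + d)) (hwd : MemI a (w + d)) : f (u + d) - f u = f (w + d) - f w := by
  have key {u w d : ℝ} (hd : 0 ≤ d) (hu : MemI a u) (hw : MemI a w) (hud : MemI a (u + d))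
      (hwd : MemI a (w + d)) : f (u + d) - f u ≤ f (w + d) - f w :=
    (le_abs_self _).trans (hf.abs_sub_le hwd hw hud hu (by simp [abs_of_nonneg hd]))
  rcases le_total 0 d with hd | hd
  · exact le_antisymm (key hd hu hw hud hwd) (key hd hw hu hwd hud)
  · have h₁ := key (neg_nonneg.2 hd) hud hwd (by simpa) (by simpa)
    have h₂ := key (neg_nonneg.2 hd) hwd hud (by simpa) (by simpa)
    simp only [add_neg_cancel_right] at h₁ h₂
    linarith

theorem map_add_add_map_zero (hf : SMonoTwo a f) (ha : 0 < a) {s t : ℝ} (hs : MemI a s)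
    (ht : MemI a t) (hst : MemI a (s + t)) : f (s + t) + f 0 = f s + f t := by
  have := hf.sub_shift_eq hs (memI_zero ha) hst (by rwa [zero_add])
  rw [zero_add] at this
  linarith

end SMonoTwo

section Cauchy

variable {g : ℝ → ℝ} {y : ℝ}

theorem map_natCast_mul_of_add
    (hadd : ∀ s t, 0 ≤ s → 0 ≤ t → s + t ≤ y → g (s + t) = g s + g t) (n : ℕ) {t : ℝ}
    (ht : 0 ≤ t) (hnt : n * t ≤ y) : g (n * t) = n * g t := by
  induction n with
  | zero =>
    have h0 := hadd 0 0 le_rfl le_rfl (by simpa using hnt)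
    simp only [add_zero] at h0
    simp only [CharP.cast_eq_zero, zero_mul]
    linarith
  | succ n ih =>
    have hnt' : (n : ℝ) * t ≤ y := by push_cast at hnt; nlinarith
    push_cast at hnt ⊢
    rw [add_one_mul, hadd _ _ (by positivity) ht (by linarith), ih hnt']
    ring

variable (hy : 0 < y) (hmono : MonotoneOn g (Icc 0 y))
  (hadd : ∀ s t, 0 ≤ s → 0 ≤ t → s + t ≤ y → g (s + t) = g s + g t)
include hy hmono hadd

theorem abs_sub_div_mul_le_of_add (n : ℕ) {x : ℝ} (hx : x ∈ Ico 0 y) :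
    |g x - g y / y * x| ≤ g y / (n + 1) := by
  set t := y / (n + 1)
  have ht : 0 < t := by positivity
  have hyt : y = (n + 1 : ℕ) * t := by simp only [t]; push_cast; field_simp
  have hg (k : ℕ) (hk : k * t ≤ y) := map_natCast_mul_of_add hadd k ht.le hk
  have hgy : g y = (n + 1) * g t := by rw [hyt, hg _ hyt.ge]; push_cast; rfl
  have hgt : 0 ≤ g t := by
    have h0 := hg 0 (by simpa using hy.le)
    simp only [CharP.cast_eq_zero, zero_mul] at h0
    rw [← h0]
    exact hmono ⟨le_rfl, hy.le⟩ ⟨ht.le, by rw [hyt]; push_cast; nlinarith⟩ ht.le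
  set m := ⌊x / t⌋₊
  have hm₁ : (m : ℝ) ≤ x / t := Nat.floor_le (div_nonneg hx.1 ht.le)
  have hm₂ : x / t < m + 1 := Nat.lt_floor_add_one _
  have hmn : m + 1 ≤ n + 1 := by
    have : x / t < (n + 1 : ℕ) := by rw [div_lt_iff₀ ht, ← hyt]; exact hx.2
    exact_mod_cast (Nat.cast_lt.1 (hm₁.trans_lt this)).nat_succ_le
  have hmx : m * t ≤ x := (le_div_iff₀ ht).1 hm₁
  have hxm : x < (m + 1 : ℕ) * t := by push_cast; exact (div_lt_iff₀ ht).1 hm₂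
  have hmy : (m + 1 : ℕ) * t ≤ y := by rw [hyt]; gcongr
  have hlow : m * g t ≤ g x := by
    rw [← hg m (hmx.trans hx.2.le)]
    exact hmono ⟨by positivity, hmx.trans hx.2.le⟩ (Ico_subset_Icc_self hx) hmx
  have hupp : g x ≤ (m + 1 : ℕ) * g t := by
    rw [← hg (m + 1) hmy]
    exact hmono (Ico_subset_Icc_self hx) ⟨by positivity, hmy⟩ hxm.le
  push_cast at hupp
  have hcx : g y / y * x = g t * (x / t) := by rw [hgy, hyt]; push_cast; field_simp
  have hgt' : g y / (n + 1) = g t := by rw [hgy]; field_simp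
  rw [hcx, abs_le, hgt']
  constructor <;>
    linarith [mul_le_mul_of_nonneg_left hm₁ hgt, mul_le_mul_of_nonneg_left hm₂.le hgt]

theorem eq_div_mul_of_add {x : ℝ} (hx : x ∈ Icc 0 y) : g x = g y / y * x := by
  rcases hx.2.eq_or_lt with rfl | hxy
  · field_simp
  by_contra hne
  have hpos : 0 < |g x - g y / y * x| := abs_pos.2 (sub_ne_zero.2 hne)
  obtain ⟨n, hn⟩ := exists_nat_gt (g y / |g x - g y / y * x|)
  have hle := abs_sub_div_mul_le_of_add hy hmono hadd n ⟨hx.1, hxy⟩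
  rw [div_lt_iff₀ hpos] at hn
  rw [le_div_iff₀ (by positivity)] at hle
  nlinarith

end Cauchy

theorem exists_affine_of_monotoneOn_of_add {a : EReal} {f : ℝ → ℝ} (ha : 0 < a)
    (hmono : MonotoneOn f {x | MemI a x})
    (hadd : ∀ s t, MemI a s → MemI a t → MemI a (s + t) → f (s + t) + f 0 = f s + f t) :
    ∃ c d : ℝ, ∀ x : ℝ, MemI a x → f x = c * x + d := by
  obtain ⟨b, hb, hbI⟩ := exists_pos_memI ha
  have hnonneg {z : ℝ} (hz : 0 ≤ z) (hzI : MemI a z) : f z - f 0 = (f b - f 0) / b * z := by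
    have hyI : MemI a (max z b) := by rcases max_choice z b with h | h <;> rw [h] <;> assumption
    set y := max z b
    have hy : 0 < y := hb.trans_le (le_max_right _ _)
    have hIcc {s : ℝ} (hs : s ∈ Icc 0 y) : MemI a s :=
      hyI.of_abs_le (abs_le_abs_of_nonneg hs.1 hs.2)
    have hlin {s : ℝ} (hs : s ∈ Icc 0 y) := eq_div_mul_of_add (g := fun x => f x - f 0) hy
      (fun s hs t ht hst => sub_le_sub_right (hmono (hIcc hs) (hIcc ht) hst) _)
      (fun s t hs ht hst => by
        have := hadd s t (hIcc ⟨hs, by linarith⟩) (hIcc ⟨ht, by linarith⟩)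
          (hIcc ⟨by positivity, hst⟩)
        linarith) hs
    have hzy := hlin ⟨hz, le_max_left _ _⟩
    have hby := hlin ⟨hb.le, le_max_right _ _⟩
    rw [hzy, hby]
    field_simp
  refine ⟨(f b - f 0) / b, f 0, fun x hx => ?_⟩
  rcases le_total 0 x with hx0 | hx0
  · linarith [hnonneg hx0 hx]
  · have hneg : MemI a (-x) := hx.of_abs_le (abs_neg x).le
    have hodd := hadd x (-x) hx hneg (by rw [add_neg_cancel]; exact memI_zero ha)
    rw [add_neg_cancel] at hodd
    linarith [hnonneg (neg_nonneg.2 hx0) hneg]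

/-- Proposition 1.2 (1): if `f[A] ≥ f[B]` for all symmetric 2×2 real matrices `A ≥ B` with
entries in `(-α, α)` (with no positivity assumption on `B`), then `f` is affine on `(-α, α)`. -/
theorem stmt_0 (a : EReal) (ha : 0 < a) (f : ℝ → ℝ)
    (h : ∀ A B : Matrix (Fin 2) (Fin 2) ℝ, A.IsSymm → B.IsSymm →
      EntriesIn a A → EntriesIn a B → (A - B).PosSemidef →
      (A.map f - B.map f).PosSemidef) :
    ∃ c d : ℝ, ∀ x : ℝ, MemI a x → f x = c * x + d :=
  have hf : SMonoTwo a f := h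
  exists_affine_of_monotoneOn_of_add ha hf.monotoneOn fun _ _ => hf.map_add_add_map_zero ha
end

section
/- Let 0 < α ≤ ∞ and let f be a nonnegative real function on (0,α). The following are equivalent: (a) f is non-decreasing and √-submultiplicative; (b) f is non-decreasing, continuous, and √-submultiplicative; (c) f is identically zero, or there exists a non-decreasing convex function g on (-∞, log α) such that f(t) = exp(g(log t)) for all t ∈ (0,α). -/
open Matrix

/-!
In the coordinate `y = log t`, √-submultiplicativity of `f` says that `h = f ∘ exp` satisfies
`h ((x + y) / 2) ≤ √(h x * h y)` on `D = (-∞, log α)`. If `h y₀ > 0`, then `h` is positive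
everywhere on `D`: for `z > y₀` in `D`, `h y > 0` as soon as `h ((y + z) / 2) > 0`, and iterating
`y ↦ (y + z) / 2` eventually lands above `y₀`. So either `f ≡ 0` or `g = log ∘ h` is defined,
monotone and midpoint convex. Midpoint convexity gives the convexity inequality at dyadic weights,
and monotonicity of `g` extends it to all weights. Conversely, a convex `g` on the open set `D` is
continuous, and the midpoint inequality for `g` exponentiates to √-submultiplicativity of `f`.
-/

open Real Set Filter Topology

lemma dyadic_mem_of_midpoint_mem {S : Set ℝ} (h₀ : (0 : ℝ) ∈ S) (h₁ : (1 : ℝ) ∈ S)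
    (hmid : ∀ c ∈ S, ∀ d ∈ S, (c + d) / 2 ∈ S) (n : ℕ) :
    ∀ k : ℕ, k ≤ 2 ^ n → (k / 2 ^ n : ℝ) ∈ S := by
  induction n with
  | zero =>
    intro k hk
    interval_cases k <;> simpa
  | succ n ih =>
    intro k hk
    have hsplit : (k / 2 ^ (n + 1) : ℝ) =
        ((min k (2 ^ n) : ℕ) / 2 ^ n + (k - min k (2 ^ n) : ℕ) / 2 ^ n) / 2 := by
      rw [Nat.cast_sub (min_le_left _ _)]
      field_simp
      ring
    rw [hsplit]
    exact hmid _ (ih _ (min_le_right _ _)) _ (ih _ (by rw [pow_succ] at hk; omega))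

lemma le_of_forall_dyadic_le {u v : ℝ → ℝ} (hu : MonotoneOn u (Icc 0 1)) (hv : Continuous v)
    (h : ∀ n k : ℕ, k ≤ 2 ^ n → u (k / 2 ^ n) ≤ v (k / 2 ^ n)) {p : ℝ} (hp : p ∈ Icc 0 1) :
    u p ≤ v p := by
  set c : ℕ → ℝ := fun n => ⌈p * 2 ^ n⌉₊ / 2 ^ n
  have hpc : ∀ n, p ≤ c n := fun n => by
    rw [le_div_iff₀ (by positivity)]
    exact Nat.le_ceil _
  have hc_le : ∀ n, ⌈p * 2 ^ n⌉₊ ≤ 2 ^ n := fun n => by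
    rw [Nat.ceil_le]
    push_cast
    nlinarith [hp.2, pow_pos (two_pos (α := ℝ)) n]
  have hcp : ∀ n, c n ≤ p + (1 / 2) ^ n := fun n => by
    rw [div_le_iff₀ (by positivity), add_mul, _root_.one_div_pow,
      one_div_mul_cancel (by positivity)]
    exact (Nat.ceil_lt_add_one (by have := hp.1; positivity)).le
  have hlim : Tendsto c atTop (𝓝 p) := by
    refine tendsto_of_tendsto_of_tendsto_of_le_of_le tendsto_const_nhds ?_ hpc hcp
    simpa using tendsto_const_nhds.add
      (tendsto_pow_atTop_nhds_zero_of_lt_one (by norm_num) (by norm_num : (1 / 2 : ℝ) < 1))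
  refine ge_of_tendsto ((hv.tendsto p).comp hlim) (Eventually.of_forall fun n => ?_)
  have hc_mem : c n ∈ Icc 0 1 :=
    ⟨hp.1.trans (hpc n), (div_le_one (by positivity)).2 (by exact_mod_cast hc_le n)⟩
  exact (hu hp hc_mem (hpc n)).trans (h n _ (hc_le n))

lemma Convex.add_div_two_mem {D : Set ℝ} (hD : Convex ℝ D) {x y : ℝ} (hx : x ∈ D) (hy : y ∈ D) :
    (x + y) / 2 ∈ D := by
  simpa [midpoint_eq_smul_add, div_eq_inv_mul] using hD.midpoint_mem hx hy

theorem MonotoneOn.convexOn_of_midpoint_le {D : Set ℝ} {g : ℝ → ℝ} (hD : Convex ℝ D)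
    (hg : MonotoneOn g D) (hmid : ∀ x ∈ D, ∀ y ∈ D, g ((x + y) / 2) ≤ (g x + g y) / 2) :
    ConvexOn ℝ D g := by
  refine LinearOrder.convexOn_of_lt hD fun x hx y hy hxy a b ha hb hab => ?_
  set ℓ : ℝ → ℝ := fun c => (1 - c) * x + c * y
  set v : ℝ → ℝ := fun c => (1 - c) * g x + c * g y
  have hℓD : ∀ c ∈ Icc (0 : ℝ) 1, ℓ c ∈ D := fun c hc => by
    simpa using hD hx hy (by linarith [hc.2]) hc.1 (by ring)
  have hgℓ : MonotoneOn (g ∘ ℓ) (Icc 0 1) := fun c hc d hd hcd =>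
    hg (hℓD c hc) (hℓD d hd) (by simp only [ℓ]; nlinarith)
  have hdyadic := dyadic_mem_of_midpoint_mem (S := {c ∈ Icc 0 1 | g (ℓ c) ≤ v c})
    ⟨by norm_num, by simp [ℓ, v]⟩ ⟨by norm_num, by simp [ℓ, v]⟩ fun c hc d hd => by
      refine ⟨⟨by linarith [hc.1.1, hd.1.1], by linarith [hc.1.2, hd.1.2]⟩, ?_⟩
      have hℓmid : ℓ ((c + d) / 2) = (ℓ c + ℓ d) / 2 := by simp only [ℓ]; ring
      calc g (ℓ ((c + d) / 2)) ≤ (g (ℓ c) + g (ℓ d)) / 2 :=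
            hℓmid ▸ hmid _ (hℓD c hc.1) _ (hℓD d hd.1)
        _ ≤ (v c + v d) / 2 := by linarith [hc.2, hd.2]
        _ = v ((c + d) / 2) := by simp only [v]; ring
  have := le_of_forall_dyadic_le hgℓ (by fun_prop) (fun n k hk => (hdyadic n k hk).2)
    (p := b) ⟨hb.le, by linarith⟩
  obtain rfl : a = 1 - b := by linarith
  simpa [ℓ, v] using this

lemma MonotoneOn.pos_of_midpoint_le_sqrt {D : Set ℝ} {h : ℝ → ℝ} (hD : Convex ℝ D)
    (hmono : MonotoneOn h D) (hmid : ∀ x ∈ D, ∀ y ∈ D, h ((x + y) / 2) ≤ √(h x * h y))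
    {y₀ z : ℝ} (hy₀ : y₀ ∈ D) (hz : z ∈ D) (hy₀z : y₀ < z) (hpos : 0 < h y₀) {y : ℝ}
    (hy : y ∈ D) : 0 < h y := by
  have hz_pos : 0 < h z := hpos.trans_le (hmono hy₀ hz hy₀z.le)
  have key : ∀ n : ℕ, ∀ w ∈ D, z - w ≤ 2 ^ n * (z - y₀) → 0 < h w := by
    intro n
    induction n with
    | zero => exact fun w hw hwz => hpos.trans_le (hmono hy₀ hw (by linarith))
    | succ n ih =>
      intro w hw hwz
      have hmid_pos : 0 < √(h w * h z) :=
        (ih _ (hD.add_div_two_mem hw hz) (by rw [pow_succ] at hwz; linarith)).trans_le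
          (hmid w hw z hz)
      exact pos_of_mul_pos_left (Real.sqrt_pos.1 hmid_pos) hz_pos.le
  obtain ⟨n, hn⟩ := pow_unbounded_of_one_lt ((z - y) / (z - y₀)) one_lt_two
  exact key n y hy ((div_le_iff₀ (sub_pos.2 hy₀z)).1 hn.le)

lemma MonotoneOn.convexOn_log_of_midpoint_le_sqrt {D : Set ℝ} {h : ℝ → ℝ} (hD : Convex ℝ D)
    (hmono : MonotoneOn h D) (hpos : ∀ y ∈ D, 0 < h y)
    (hmid : ∀ x ∈ D, ∀ y ∈ D, h ((x + y) / 2) ≤ √(h x * h y)) :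
    MonotoneOn (fun y => log (h y)) D ∧ ConvexOn ℝ D (fun y => log (h y)) := by
  have hlog_mono : MonotoneOn (fun y => log (h y)) D := fun x hx y hy hxy =>
    log_le_log (hpos x hx) (hmono hx hy hxy)
  refine ⟨hlog_mono, hlog_mono.convexOn_of_midpoint_le hD fun x hx y hy => ?_⟩
  calc log (h ((x + y) / 2)) ≤ log √(h x * h y) :=
        log_le_log (hpos _ (hD.add_div_two_mem hx hy)) (hmid x hx y hy)
    _ = (log (h x) + log (h y)) / 2 := by
      rw [log_sqrt (mul_pos (hpos x hx) (hpos y hy)).le, log_mul (hpos x hx).ne' (hpos y hy).ne']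

lemma ConvexOn.exp_midpoint_le_sqrt {D : Set ℝ} {g : ℝ → ℝ} (hg : ConvexOn ℝ D g) {x y : ℝ}
    (hx : x ∈ D) (hy : y ∈ D) : exp (g ((x + y) / 2)) ≤ √(exp (g x) * exp (g y)) := by
  have hmid := hg.2 hx hy (by norm_num : (0 : ℝ) ≤ 1 / 2) (by norm_num : (0 : ℝ) ≤ 1 / 2)
    (by norm_num)
  simp only [smul_eq_mul] at hmid
  calc exp (g ((x + y) / 2)) ≤ exp ((g x + g y) / 2) :=
        exp_le_exp.2 (by rw [show (x + y) / 2 = 1 / 2 * x + 1 / 2 * y by ring]; linarith)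
    _ = √(exp (g x) * exp (g y)) := by rw [← exp_add, exp_half]

lemma log_sqrt_mul {s t : ℝ} (hs : 0 < s) (ht : 0 < t) :
    log √(s * t) = (log s + log t) / 2 := by
  rw [log_sqrt (mul_pos hs ht).le, log_mul hs.ne' ht.ne']

lemma convex_setOf_exp_lt (a : EReal) : Convex ℝ {y : ℝ | ((exp y : ℝ) : EReal) < a} :=
  Set.OrdConnected.convex ⟨fun _ _ _ hy _ hz =>
    lt_of_le_of_lt (EReal.coe_le_coe_iff.2 (exp_le_exp.2 hz.2)) hy⟩

lemma isOpen_setOf_exp_lt (a : EReal) : IsOpen {y : ℝ | ((exp y : ℝ) : EReal) < a} :=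
  isOpen_Iio.preimage (continuous_coe_real_ereal.comp continuous_exp)

section LogDomain

variable {a : EReal} {f : ℝ → ℝ}

lemma memP_iff_log_mem {t : ℝ} :
    MemP a t ↔ 0 < t ∧ log t ∈ {y : ℝ | ((exp y : ℝ) : EReal) < a} := by
  refine ⟨fun ht => ⟨ht.1, ?_⟩, fun ht => ⟨ht.1, ?_⟩⟩
  · simpa [exp_log ht.1] using ht.2
  · simpa [exp_log ht.1] using ht.2

lemma MemP.log_mem {t : ℝ} (ht : MemP a t) : log t ∈ {y : ℝ | ((exp y : ℝ) : EReal) < a} :=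
  (memP_iff_log_mem.1 ht).2

lemma MemP.sqrt_mul {s t : ℝ} (hs : MemP a s) (ht : MemP a t) : MemP a √(s * t) :=
  memP_iff_log_mem.2 ⟨Real.sqrt_pos.2 (mul_pos hs.1 ht.1), log_sqrt_mul hs.1 ht.1 ▸
    (convex_setOf_exp_lt a).add_div_two_mem hs.log_mem ht.log_mem⟩

lemma exists_convexOn_log_of_sqrt_submul (hf : ∀ t, MemP a t → 0 ≤ f t)
    (hmono : MonotoneOn f {t | MemP a t})
    (hsub : ∀ s t, MemP a s → MemP a t → f √(s * t) ≤ √(f s * f t))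
    {t₀ : ℝ} (ht₀ : MemP a t₀) (hft₀ : f t₀ ≠ 0) :
    ∃ g : ℝ → ℝ, MonotoneOn g {y : ℝ | ((exp y : ℝ) : EReal) < a} ∧
      ConvexOn ℝ {y : ℝ | ((exp y : ℝ) : EReal) < a} g ∧
      ∀ t, MemP a t → f t = exp (g (log t)) := by
  set D := {y : ℝ | ((exp y : ℝ) : EReal) < a}
  have hD : Convex ℝ D := convex_setOf_exp_lt a
  have hmono_exp : MonotoneOn (fun y => f (exp y)) D := fun x hx y hy hxy =>
    hmono ⟨exp_pos x, hx⟩ ⟨exp_pos y, hy⟩ (exp_le_exp.2 hxy)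
  have hmid_exp : ∀ x ∈ D, ∀ y ∈ D, f (exp ((x + y) / 2)) ≤ √(f (exp x) * f (exp y)) :=
    fun x hx y hy => by
      rw [exp_half, exp_add]
      exact hsub _ _ ⟨exp_pos x, hx⟩ ⟨exp_pos y, hy⟩
  obtain ⟨z, hzD, hz⟩ := ((eventually_nhdsWithin_of_eventually_nhds
    ((isOpen_setOf_exp_lt a).mem_nhds ht₀.log_mem)).and
      (self_mem_nhdsWithin (s := Ioi (log t₀)))).exists
  have hpos : ∀ y ∈ D, 0 < f (exp y) := fun y hy =>
    hmono_exp.pos_of_midpoint_le_sqrt hD hmid_exp ht₀.log_mem hzD hz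
      (by simpa [exp_log ht₀.1] using (hf t₀ ht₀).lt_of_ne' hft₀) hy
  obtain ⟨hg_mono, hg_conv⟩ := hmono_exp.convexOn_log_of_midpoint_le_sqrt hD hpos hmid_exp
  refine ⟨_, hg_mono, hg_conv, fun t ht => ?_⟩
  have hft := hpos _ ht.log_mem
  rw [exp_log ht.1] at hft ⊢
  exact (exp_log hft).symm

lemma monotoneOn_continuousOn_sqrt_submul_of_convexOn {g : ℝ → ℝ}
    (hg_mono : MonotoneOn g {y : ℝ | ((exp y : ℝ) : EReal) < a})
    (hg_conv : ConvexOn ℝ {y : ℝ | ((exp y : ℝ) : EReal) < a} g)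
    (hfg : ∀ t, MemP a t → f t = exp (g (log t))) :
    MonotoneOn f {t | MemP a t} ∧ ContinuousOn f {t | MemP a t} ∧
      ∀ s t, MemP a s → MemP a t → f √(s * t) ≤ √(f s * f t) := by
  refine ⟨fun s hs t ht hst => ?_, ?_, fun s t hs ht => ?_⟩
  · rw [hfg s hs, hfg t ht]
    exact exp_le_exp.2 (hg_mono hs.log_mem ht.log_mem (log_le_log hs.1 hst))
  · refine ContinuousOn.congr ?_ hfg
    exact continuous_exp.comp_continuousOn <|
      (hg_conv.continuousOn (isOpen_setOf_exp_lt a)).comp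
        (continuousOn_log.mono fun _ ht => ht.1.ne') fun _ ht => MemP.log_mem ht
  · rw [hfg _ (hs.sqrt_mul ht), hfg s hs, hfg t ht, log_sqrt_mul hs.1 ht.1]
    exact hg_conv.exp_midpoint_le_sqrt hs.log_mem ht.log_mem

end LogDomain

theorem stmt_1_general (a : EReal) (f : ℝ → ℝ)
    (hf : ∀ t, MemP a t → 0 ≤ f t) :
    List.TFAE
      [ (MonotoneOn f {t | MemP a t} ∧
          ∀ s t, MemP a s → MemP a t →
            f (Real.sqrt (s * t)) ≤ Real.sqrt (f s * f t)),
        (MonotoneOn f {t | MemP a t} ∧ ContinuousOn f {t | MemP a t} ∧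
          ∀ s t, MemP a s → MemP a t →
            f (Real.sqrt (s * t)) ≤ Real.sqrt (f s * f t)),
        ((∀ t, MemP a t → f t = 0) ∨
          ∃ g : ℝ → ℝ,
            MonotoneOn g {y : ℝ | ((Real.exp y : ℝ) : EReal) < a} ∧
            ConvexOn ℝ {y : ℝ | ((Real.exp y : ℝ) : EReal) < a} g ∧
            ∀ t, MemP a t → f t = Real.exp (g (Real.log t))) ] := by
  tfae_have 2 → 1 := fun h => ⟨h.1, h.2.2⟩
  tfae_have 1 → 3 := by
    rintro ⟨hmono, hsub⟩
    refine or_iff_not_imp_left.2 fun hne => ?_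
    push Not at hne
    obtain ⟨t₀, ht₀, hft₀⟩ := hne
    exact exists_convexOn_log_of_sqrt_submul hf hmono hsub ht₀ hft₀
  tfae_have 3 → 2 := by
    rintro (hzero | ⟨g, hg_mono, hg_conv, hfg⟩)
    · refine ⟨fun s hs t ht _ => by rw [hzero s hs, hzero t ht],
        continuousOn_const.congr hzero, fun s t hs ht => ?_⟩
      rw [hzero _ (hs.sqrt_mul ht), hzero s hs, hzero t ht, mul_zero, Real.sqrt_zero]
    · exact monotoneOn_continuousOn_sqrt_submul_of_convexOn hg_mono hg_conv hfg
  tfae_finish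

/-- Lemma 2.1: for a nonnegative function `f` on `(0, α)` the following are equivalent:
(a) `f` is non-decreasing and √-submultiplicative;
(b) `f` is non-decreasing, continuous and √-submultiplicative;
(c) `f ≡ 0` on `(0, α)`, or `f t = exp (g (log t))` for a non-decreasing convex function `g`
on `(-∞, log α)` (described as the set `{y | exp y < α}`). -/
theorem stmt_1 (a : EReal) (ha : 0 < a) (f : ℝ → ℝ)
    (hf : ∀ t, MemP a t → 0 ≤ f t) :
    List.TFAE
      [ (MonotoneOn f {t | MemP a t} ∧
          ∀ s t, MemP a s → MemP a t →
            f (Real.sqrt (s * t)) ≤ Real.sqrt (f s * f t)),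
        (MonotoneOn f {t | MemP a t} ∧ ContinuousOn f {t | MemP a t} ∧
          ∀ s t, MemP a s → MemP a t →
            f (Real.sqrt (s * t)) ≤ Real.sqrt (f s * f t)),
        ((∀ t, MemP a t → f t = 0) ∨
          ∃ g : ℝ → ℝ,
            MonotoneOn g {y : ℝ | ((Real.exp y : ℝ) : EReal) < a} ∧
            ConvexOn ℝ {y : ℝ | ((Real.exp y : ℝ) : EReal) < a} g ∧
            ∀ t, MemP a t → f t = Real.exp (g (Real.log t))) ] :=
  stmt_1_general a f hf
end

section
/- Let 0 < α ≤ ∞ and let f be a real function on (-α,α). If f is S-monotone of order 3, then f is continuously differentiable on (-α,α). -/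
open Matrix

/-!
For `|y| ≤ b` the matrix `B = !![b, b, y; b, b, y; y, y, b]` is positive semidefinite, so
S-monotonicity applied to `B ≤ B + v vᵀ` with `v = (p, p', q)`, tested against `(λ, μ, 1)`,
gives a nonnegative quadratic expression in increments of `f`. With `p = p' = 0` it says that
`f` is monotone on `(0, α)`, hence differentiable at some `b` in any interval `(r, α)`.
With `λ = τ / s`, `μ = -τ / s'`, where `s = p q`, `s' = p' q`, it becomes a nonnegative quadratic
polynomial in `τ`, whose discriminant bounds the squared difference of the slopes of `f` at `y`
with steps `s` and `s'` by a second difference of the slopes of `f` at `b`, which tends to `0`.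
Hence the difference quotients of `f` are uniformly Cauchy on `[-r, r]` for every `r < α`; their
uniform limit is `f'`, which is therefore continuous.
-/

open Filter Topology Set MeasureTheory

lemma memI_of_abs_le {a : EReal} {β z : ℝ} (hβ : (β : EReal) < a) (hz : |z| ≤ β) : MemI a z := by
  obtain ⟨h₁, h₂⟩ := abs_le.1 hz
  refine ⟨lt_of_lt_of_le ?_ (EReal.coe_le_coe_iff.2 h₁), (EReal.coe_le_coe_iff.2 h₂).trans_lt hβ⟩
  rw [EReal.coe_neg]
  exact EReal.neg_lt_neg_iff.2 hβ

lemma posSemidef_vecMulVec_self {n : Type*} [Fintype n] (v : n → ℝ) :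
    (vecMulVec v v).PosSemidef := by
  simpa only [star_trivial] using posSemidef_vecMulVec_self_star v

lemma SMono.dotProduct_mulVec_map_sub_nonneg {a : EReal} {f : ℝ → ℝ} {n : ℕ} (h : SMono a f n)
    {B : Matrix (Fin n) (Fin n) ℝ} (v x : Fin n → ℝ) (hB : B.PosSemidef) (hBa : EntriesIn a B)
    (hAa : EntriesIn a (B + vecMulVec v v)) :
    0 ≤ x ⬝ᵥ ((B + vecMulVec v v).map f - B.map f) *ᵥ x := by
  have hv := posSemidef_vecMulVec_self v
  have hB' : B.IsSymm := isHermitian_iff_isSymm.1 hB.isHermitian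
  have hA' : (B + vecMulVec v v).IsSymm := isHermitian_iff_isSymm.1 (hB.add hv).isHermitian
  have := h _ B hA' hB' hAa hBa hB (by simpa using hv)
  simpa using (posSemidef_iff_dotProduct_mulVec.1 this).2 x

lemma SMono.three_point_nonneg {a : EReal} {f : ℝ → ℝ} (h : SMono a f 3) {b y p p' q : ℝ}
    (hyb : |y| ≤ b) (hb : MemI a b) (hy : MemI a y) (h₁ : MemI a (b + p ^ 2))
    (h₂ : MemI a (b + p' ^ 2)) (h₃ : MemI a (b + q ^ 2)) (h₄ : MemI a (b + p * p'))
    (h₅ : MemI a (y + p * q)) (h₆ : MemI a (y + p' * q)) (lam mu : ℝ) :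
    0 ≤ lam ^ 2 * (f (b + p ^ 2) - f b) + mu ^ 2 * (f (b + p' ^ 2) - f b) + (f (b + q ^ 2) - f b)
      + 2 * lam * mu * (f (b + p * p') - f b) + 2 * lam * (f (y + p * q) - f y)
      + 2 * mu * (f (y + p' * q) - f y) := by
  obtain ⟨hyb₁, hyb₂⟩ := abs_le.1 hyb
  -- this is `B = !![b, b, y; b, b, y; y, y, b]`
  have hB : (((b + y) / 2) • vecMulVec ![1, 1, 1] ![1, 1, 1]
      + ((b - y) / 2) • vecMulVec ![1, 1, -1] ![(1 : ℝ), 1, -1]).PosSemidef :=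
    .add ((posSemidef_vecMulVec_self _).smul (by linarith))
      ((posSemidef_vecMulVec_self _).smul (by linarith))
  have key := h.dotProduct_mulVec_map_sub_nonneg ![p, p', q] ![lam, mu, 1] hB
    (fun i j => by fin_cases i <;> fin_cases j <;> simp <;> ring_nf <;> assumption)
    (fun i j => by
      fin_cases i <;> fin_cases j <;> simp <;> ring_nf <;> first | assumption | rwa [mul_comm])
  have hb' : (b + y) / 2 + (b - y) / 2 = b := by ring
  have hy' : (b + y) / 2 + -((b - y) / 2) = y := by ring
  simp [dotProduct, mulVec, Fin.sum_univ_three, hb', hy', ← sq, mul_comm p' p, mul_comm q p,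
    mul_comm q p'] at key
  linarith

lemma MemP.memI {a : EReal} {x : ℝ} (hx : MemP a x) : MemI a x := by
  have hx₀ : (0 : EReal) < x := EReal.coe_pos.2 hx.1
  exact ⟨EReal.neg_lt_comm.2 ((EReal.neg_lt_zero.2 hx₀).trans (hx₀.trans hx.2)), hx.2⟩

lemma SMono.monotoneOn {a : EReal} {f : ℝ → ℝ} (h : SMono a f 3) : MonotoneOn f {x | MemP a x} := by
  intro y hy x hx hyx
  have hq : y + √(x - y) ^ 2 = x := by rw [Real.sq_sqrt (by linarith)]; ring
  have hy' := hy.memI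
  have := h.three_point_nonneg (p := 0) (p' := 0) (q := √(x - y)) (abs_of_pos hy.1).le hy' hy'
    (by simpa using hy') (by simpa using hy') (by simpa [hq] using hx.memI) (by simpa using hy')
    (by simpa using hy') (by simpa using hy') 0 0
  simp [hq] at this
  linarith

lemma MonotoneOn.exists_differentiableAt_mem_Ioo {f : ℝ → ℝ} {u v : ℝ}
    (hf : MonotoneOn f (Ioo u v)) (huv : u < v) : ∃ b ∈ Ioo u v, DifferentiableAt ℝ f b := by
  have : (ae (volume.restrict (Ioo u v))).NeBot := ae_restrict_neBot.2 (by simp [huv])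
  obtain ⟨b, hb, hdiff⟩ := ((ae_restrict_mem (s := Ioo u v) measurableSet_Ioo).and
    (ae_restrict_of_ae hf.ae_differentiableWithinAt_of_mem)).exists
  exact ⟨b, hb, (hdiff hb).differentiableAt (Ioo_mem_nhds hb.1 hb.2)⟩

lemma abs_mul_div_sq_le {q t t' : ℝ} (ht : |t| ≤ q ^ 2) (ht' : |t'| ≤ q ^ 2) :
    |t * t' / q ^ 2| ≤ q ^ 2 := by
  rcases eq_or_ne q 0 with rfl | hq
  · simp
  have hq2 : 0 < q ^ 2 := pow_two_pos_of_ne_zero hq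
  rw [abs_div, abs_mul, abs_of_pos hq2, div_le_iff₀ hq2]
  exact mul_le_mul ht ht' (abs_nonneg _) hq2.le

lemma SMono.sq_slope_sub_slope_le {a : EReal} {f : ℝ → ℝ} (h : SMono a f 3) {β b y s s' q : ℝ}
    (hβ : (β : EReal) < a) (hyb : |y| ≤ b) (hbq : b + q ^ 2 ≤ β) (hs₀ : s ≠ 0) (hs'₀ : s' ≠ 0)
    (hs : |s| ≤ q ^ 2) (hs' : |s'| ≤ q ^ 2) (hys : |y + s| ≤ β) (hys' : |y + s'| ≤ β) :
    (slope f y (y + s) - slope f y (y + s')) ^ 2 ≤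
      (slope f b (b + s * s / q ^ 2) + slope f b (b + s' * s' / q ^ 2)
        - 2 * slope f b (b + s * s' / q ^ 2)) / q ^ 2 * (f (b + q ^ 2) - f b) := by
  have hq : q ≠ 0 := by
    rintro rfl
    exact hs₀ (abs_nonpos_iff.1 (by simpa using hs))
  have hb : 0 ≤ b := (abs_nonneg y).trans hyb
  have entry {t t' : ℝ} (ht : |t| ≤ q ^ 2) (ht' : |t'| ≤ q ^ 2) : MemI a (b + t * t' / q ^ 2) := by
    refine memI_of_abs_le hβ (abs_le.2 ⟨?_, ?_⟩) <;>
      linarith [abs_le.1 (abs_mul_div_sq_le ht ht'), sq_nonneg q]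
  have hpp (t t' : ℝ) : t / q * (t' / q) = t * t' / q ^ 2 := by ring
  have quad (τ : ℝ) : 0 ≤ ((slope f b (b + s * s / q ^ 2) + slope f b (b + s' * s' / q ^ 2)
        - 2 * slope f b (b + s * s' / q ^ 2)) / q ^ 2) * (τ * τ)
      + (2 * (slope f y (y + s) - slope f y (y + s'))) * τ + (f (b + q ^ 2) - f b) := by
    have := h.three_point_nonneg (p := s / q) (p' := s' / q) (q := q) hyb
      (memI_of_abs_le hβ (by rw [abs_of_nonneg hb]; nlinarith))
      (memI_of_abs_le hβ (hyb.trans (by nlinarith)))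
      (by rw [sq, hpp]; exact entry hs hs) (by rw [sq, hpp]; exact entry hs' hs')
      (memI_of_abs_le hβ (by rw [abs_of_nonneg (by positivity)]; exact hbq))
      (by rw [hpp]; exact entry hs hs')
      (by rw [div_mul_cancel₀ s hq]; exact memI_of_abs_le hβ hys)
      (by rw [div_mul_cancel₀ s' hq]; exact memI_of_abs_le hβ hys')
      (τ / s) (-(τ / s'))
    rw [sq (s / q), sq (s' / q), hpp, hpp, hpp, div_mul_cancel₀ s hq, div_mul_cancel₀ s' hq] at this
    convert this using 1
    simp only [slope_def_field, add_sub_cancel_left]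
    field_simp
    ring
  have := discrim_le_zero quad
  rw [discrim] at this
  nlinarith

lemma uniformCauchySeqOn_of_dist_le {ι α β : Type*} [PseudoMetricSpace β] {F : ι → α → β}
    {p : Filter ι} {s : Set α} {Φ : ι × ι → ℝ} (hΦ : Tendsto Φ (p ×ˢ p) (𝓝 0))
    (h : ∀ᶠ m in p ×ˢ p, ∀ x ∈ s, dist (F m.1 x) (F m.2 x) ≤ Φ m) : UniformCauchySeqOn F p s := by
  intro u hu
  obtain ⟨ε, hε, hεu⟩ := Metric.mem_uniformity_dist.1 hu
  filter_upwards [h, hΦ.eventually (gt_mem_nhds hε)] with m hm hΦm x hx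
  exact hεu ((hm x hx).trans_lt hΦm)

lemma tendsto_mul_div_nhdsNE {c : ℝ} (hc : c ≠ 0) :
    Tendsto (fun m : ℝ × ℝ => m.1 * m.2 / c) (𝓝[≠] 0 ×ˢ 𝓝[≠] 0) (𝓝[≠] 0) := by
  refine tendsto_nhdsWithin_iff.2 ⟨?_, ?_⟩
  · have : Tendsto (fun m : ℝ × ℝ => m.1 * m.2 / c) (𝓝 ((0 : ℝ), (0 : ℝ))) (𝓝 0) := by
      simpa using ((continuous_fst.mul continuous_snd).div_const c).tendsto ((0 : ℝ), (0 : ℝ))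
    refine this.mono_left ?_
    rw [nhds_prod_eq]
    exact prod_mono nhdsWithin_le_nhds nhdsWithin_le_nhds
  · filter_upwards [prod_mem_prod self_mem_nhdsWithin self_mem_nhdsWithin] with m hm
    exact div_ne_zero (mul_ne_zero hm.1 hm.2) hc

lemma HasDerivAt.tendsto_second_difference_slope {f : ℝ → ℝ} {d b c : ℝ} (hf : HasDerivAt f d b)
    (hc : c ≠ 0) :
    Tendsto (fun m : ℝ × ℝ => slope f b (b + m.1 * m.1 / c) + slope f b (b + m.2 * m.2 / c)
      - 2 * slope f b (b + m.1 * m.2 / c)) (𝓝[≠] 0 ×ˢ 𝓝[≠] 0) (𝓝 0) := by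
  have hσ : Tendsto (fun t => slope f b (b + t)) (𝓝[≠] 0) (𝓝 d) := by
    simpa [slope_def_module] using hasDerivAt_iff_tendsto_slope_zero.1 hf
  have hT := tendsto_mul_div_nhdsNE hc
  have h₁ := hσ.comp (hT.comp (tendsto_fst.prodMk tendsto_fst :
    Tendsto (fun m : ℝ × ℝ => (m.1, m.1)) (𝓝[≠] 0 ×ˢ 𝓝[≠] 0) (𝓝[≠] 0 ×ˢ 𝓝[≠] 0)))
  have h₂ := hσ.comp (hT.comp (tendsto_snd.prodMk tendsto_snd :
    Tendsto (fun m : ℝ × ℝ => (m.2, m.2)) (𝓝[≠] 0 ×ˢ 𝓝[≠] 0) (𝓝[≠] 0 ×ˢ 𝓝[≠] 0)))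
  have := (h₁.add h₂).sub ((hσ.comp hT).const_mul 2)
  rwa [show d + d - 2 * d = 0 by ring] at this

lemma SMono.uniformCauchySeqOn_slope {a : EReal} {f : ℝ → ℝ} (h : SMono a f 3) {r : ℝ}
    (hr : 0 < r) (hra : (r : EReal) < a) :
    UniformCauchySeqOn (fun s y => slope f y (y + s)) (𝓝[≠] 0) (Icc (-r) r) := by
  obtain ⟨β, hrβ, hβa⟩ := EReal.lt_iff_exists_real_btwn.1 hra
  have hrβ : r < β := EReal.coe_lt_coe_iff.1 hrβ
  have hsub : Ioo r β ⊆ {x | MemP a x} := fun x hx =>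
    ⟨hr.trans hx.1, (EReal.coe_lt_coe_iff.2 hx.2).trans hβa⟩
  obtain ⟨b, ⟨hrb, hbβ⟩, hdiff⟩ := (h.monotoneOn.mono hsub).exists_differentiableAt_mem_Ioo hrβ
  set q := √(β - b)
  have hq : q ^ 2 = β - b := Real.sq_sqrt (by linarith)
  have hq₀ : q ^ 2 ≠ 0 := by rw [hq]; linarith
  have hsmall : ∀ᶠ s in 𝓝[≠] (0 : ℝ), s ≠ 0 ∧ |s| ≤ q ^ 2 := by
    have : ∀ᶠ s in 𝓝 (0 : ℝ), |s| ≤ q ^ 2 :=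
      (continuous_abs.tendsto 0).eventually (eventually_le_nhds (by rw [abs_zero, hq]; linarith))
    exact eventually_mem_nhdsWithin.and (eventually_nhdsWithin_of_eventually_nhds this)
  have hΦ := (((hdiff.hasDerivAt.tendsto_second_difference_slope hq₀).div_const (q ^ 2)).mul_const
      (f (b + q ^ 2) - f b)).sqrt
  rw [zero_div, zero_mul, Real.sqrt_zero] at hΦ
  refine uniformCauchySeqOn_of_dist_le hΦ ?_
  filter_upwards [prod_mem_prod hsmall hsmall] with m ⟨⟨hm₁, hs₁⟩, hm₂, hs₂⟩ y ⟨hy₁, hy₂⟩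
  rw [Real.dist_eq, ← Real.sqrt_sq_eq_abs]
  refine Real.sqrt_le_sqrt
    (h.sq_slope_sub_slope_le hβa ?_ (by rw [hq]; linarith) hm₁ hm₂ hs₁ hs₂ ?_ ?_)
  all_goals
    have := abs_le.1 hs₁
    have := abs_le.1 hs₂
    exact abs_le.2 ⟨by linarith, by linarith⟩

section SlopeLimits

variable {f : ℝ → ℝ} {V : Set ℝ}

lemma UniformCauchySeqOn.differentiableAt_of_slope
    (h : UniformCauchySeqOn (fun s y => slope f y (y + s)) (𝓝[≠] 0) V) {x : ℝ} (hx : x ∈ V) :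
    DifferentiableAt ℝ f x := by
  obtain ⟨l, hl⟩ := CompleteSpace.complete (h.cauchy_map hx)
  replace hl : Tendsto (fun s => slope f x (x + s)) (𝓝[≠] 0) (𝓝 l) := hl
  exact (hasDerivAt_iff_tendsto_slope_zero.2 <| by
    simpa [slope_def_module] using hl).differentiableAt

lemma UniformCauchySeqOn.tendstoUniformlyOn_slope_deriv
    (h : UniformCauchySeqOn (fun s y => slope f y (y + s)) (𝓝[≠] 0) V) :
    TendstoUniformlyOn (fun s y => slope f y (y + s)) (deriv f) (𝓝[≠] 0) V :=
  h.tendstoUniformlyOn_of_tendsto fun x hx => by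
    simpa [slope_def_module] using
      hasDerivAt_iff_tendsto_slope_zero.1 (h.differentiableAt_of_slope hx).hasDerivAt

lemma continuousAt_slope_add {x s : ℝ} (hx : ContinuousAt f x) (hxs : ContinuousAt f (x + s)) :
    ContinuousAt (fun y => slope f y (y + s)) x := by
  simp only [slope_def_field, add_sub_cancel_left]
  exact ((hxs.comp (f := fun y => y + s) (by fun_prop)).sub hx).div_const s

end SlopeLimits

lemma differentiableAt_and_continuousOn_deriv_of_uniformCauchySeqOn_slope {f : ℝ → ℝ} {U : Set ℝ}
    (hU : IsOpen U)
    (h : ∀ x ∈ U, ∃ V ∈ 𝓝 x, UniformCauchySeqOn (fun s y => slope f y (y + s)) (𝓝[≠] 0) V) :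
    (∀ x ∈ U, DifferentiableAt ℝ f x) ∧ ContinuousOn (deriv f) U := by
  have hdiff : ∀ x ∈ U, DifferentiableAt ℝ f x := fun x hx => by
    obtain ⟨V, hV, hcauchy⟩ := h x hx
    exact hcauchy.differentiableAt_of_slope (mem_of_mem_nhds hV)
  refine ⟨hdiff, fun x hx => ContinuousAt.continuousWithinAt ?_⟩
  obtain ⟨V, hV, hcauchy⟩ := h x hx
  obtain ⟨δ, hδ, hball⟩ := Metric.mem_nhds_iff.1 (inter_mem (hU.mem_nhds hx) hV)
  have hW : Metric.ball x (δ / 2) ⊆ U ∩ V := (Metric.ball_subset_ball (by linarith)).trans hball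
  have hcont : ∀ᶠ s in 𝓝[≠] (0 : ℝ),
      ContinuousOn (fun y => slope f y (y + s)) (Metric.ball x (δ / 2)) := by
    filter_upwards [eventually_nhdsWithin_of_eventually_nhds (Metric.ball_mem_nhds 0 (half_pos hδ))]
      with s hs y hy
    have hys : y + s ∈ Metric.ball x δ := by
      rw [Metric.mem_ball, dist_comm] at hy ⊢
      calc dist x (y + s) ≤ dist x y + dist y (y + s) := dist_triangle _ _ _
        _ < δ / 2 + δ / 2 := by rw [dist_self_add_right]; exact add_lt_add hy (by simpa using hs)
        _ = δ := add_halves δ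
    exact (continuousAt_slope_add (hdiff y (hW hy).1).continuousAt
      (hdiff _ (hball hys).1).continuousAt).continuousWithinAt
  exact ((hcauchy.mono fun y hy => (hW hy).2).tendstoUniformlyOn_slope_deriv.continuousOn
    hcont.frequently).continuousAt (Metric.ball_mem_nhds x (by linarith))

lemma isOpen_setOf_memI (a : EReal) : IsOpen {x | MemI a x} :=
  isOpen_Ioo.preimage continuous_coe_real_ereal

lemma MemI.exists_abs_lt {a : EReal} {x : ℝ} (hx : MemI a x) :
    ∃ r : ℝ, |x| < r ∧ (r : EReal) < a := by
  have habs : ((|x| : ℝ) : EReal) < a := by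
    rcases abs_cases x with ⟨he, _⟩ | ⟨he, _⟩
    · rw [he]; exact hx.2
    · rw [he, EReal.coe_neg]; exact EReal.neg_lt_of_neg_lt hx.1
  obtain ⟨r, hxr, hra⟩ := EReal.lt_iff_exists_real_btwn.1 habs
  exact ⟨r, EReal.coe_lt_coe_iff.1 hxr, hra⟩

theorem stmt_6_general (a : EReal) (f : ℝ → ℝ) (h : SMono a f 3) :
    (∀ x, MemI a x → DifferentiableAt ℝ f x) ∧
    ContinuousOn (deriv f) {x | MemI a x} := by
  refine differentiableAt_and_continuousOn_deriv_of_uniformCauchySeqOn_slope (isOpen_setOf_memI a)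
    fun x hx => ?_
  obtain ⟨r, hxr, hra⟩ := MemI.exists_abs_lt hx
  obtain ⟨hxr₁, hxr₂⟩ := abs_lt.1 hxr
  exact ⟨Icc (-r) r, Icc_mem_nhds hxr₁ hxr₂,
    h.uniformCauchySeqOn_slope ((abs_nonneg x).trans_lt hxr) hra⟩

/-- Proposition 2.6: if `f` is S-monotone of order 3 on `(-α, α)`, then `f` is continuously
differentiable on `(-α, α)`. -/
theorem stmt_6 (a : EReal) (ha : 0 < a) (f : ℝ → ℝ) (h : SMono a f 3) :
    (∀ x, MemI a x → DifferentiableAt ℝ f x) ∧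
    ContinuousOn (deriv f) {x | MemI a x} :=
  stmt_6_general a f h
end

section
/- Let 0 < α ≤ ∞, n ∈ ℕ with n ≥ 1, and let f be a real function on (-α,α). If f is S-positive of order 2n, then f is S-monotone of order n; and if f is S-monotone of order 2n, then f is S-convex of order n. -/
open Matrix

/-!
For `A ≥ B ≥ 0` and a vector `v`, let `q t = v ⬝ f[(1 - t) B + t A] v`. A positive semidefinite
`2 × 2` matrix `P` with entries in `[0, 1]` gives the positive semidefinite `2n × 2n` matrix
`J ⊗ B + P ⊗ (A - B)` (`J` the all-ones matrix), whose blocks are the points `P i j` of the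
segment from `B` to `A`, and evaluating `f` of it on `c ⊗ v` gives `∑ i j, c i c j q (P i j)`.

With `P = [[1, 0], [0, 0]]` and `c = (1, -1)`, S-positivity of order `2n` gives `q 0 ≤ q 1`, which
is S-monotonicity of order `n`. S-monotonicity of order `2n`, applied to
`[[u, s], [s, s]] ≥ [[s, s], [s, s]]` and to `[[u, m], [m, m]] ≥ [[m, s], [s, s]]` with `m` the
midpoint of `s ≤ u`, makes `q` monotone and midpoint convex on `[0, 1]`; such a function lies
below its chord, which is S-convexity of order `n`.
-/

open Kronecker Set Filter Topology

lemma Matrix.posSemidef_of_isSymm_of_dotProduct_mulVec_nonneg {m : Type*} [Fintype m]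
    {M : Matrix m m ℝ} (hM : M.IsSymm) (h : ∀ v : m → ℝ, 0 ≤ v ⬝ᵥ (M *ᵥ v)) : M.PosSemidef :=
  .of_dotProduct_mulVec_nonneg (isHermitian_iff_isSymm.2 hM) fun v => by simpa using h v

lemma Matrix.PosSemidef.dotProduct_mulVec_nonneg_real {m : Type*} [Fintype m]
    {M : Matrix m m ℝ} (hM : M.PosSemidef) (v : m → ℝ) : 0 ≤ v ⬝ᵥ (M *ᵥ v) := by
  simpa using hM.dotProduct_mulVec_nonneg v

lemma Matrix.posSemidef_fin_two {x y z : ℝ} (hx : 0 ≤ x) (hz : 0 ≤ z) (hxyz : y ^ 2 ≤ x * z) :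
    !![x, y; y, z].PosSemidef := by
  refine posSemidef_of_isSymm_of_dotProduct_mulVec_nonneg ?_ fun v => ?_
  · ext i j; fin_cases i <;> fin_cases j <;> rfl
  · simp only [dotProduct, mulVec, Fin.sum_univ_two, of_apply, cons_val', cons_val_zero,
      cons_val_one, empty_val', cons_val_fin_one]
    rcases hx.eq_or_lt with rfl | hx
    · obtain rfl : y = 0 := by nlinarith [sq_nonneg y]
      nlinarith [mul_nonneg hz (sq_nonneg (v 1))]
    · nlinarith [sq_nonneg (x * v 0 + y * v 1), mul_nonneg (sub_nonneg.2 hxyz) (sq_nonneg (v 1))]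

lemma MonotoneOn.le_chord_of_midpoint_convex {F : ℝ → ℝ} (hmono : MonotoneOn F (Icc 0 1))
    (hmid : ∀ s u, 0 ≤ s → s ≤ u → u ≤ 1 → 2 * F ((s + u) / 2) ≤ F s + F u)
    {t : ℝ} (ht : t ∈ Icc (0 : ℝ) 1) : F t ≤ (1 - t) * F 0 + t * F 1 := by
  -- Monotonicity gives the bound with error `F 1 - F 0`; each midpoint step halves the error.
  have approx : ∀ k : ℕ, ∀ t ∈ Icc (0 : ℝ) 1,
      F t ≤ (1 - t) * F 0 + t * F 1 + (F 1 - F 0) / 2 ^ k := by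
    intro k
    induction k with
    | zero =>
      intro t ht
      have h01 : F 0 ≤ F 1 :=
        hmono (left_mem_Icc.2 zero_le_one) (right_mem_Icc.2 zero_le_one) zero_le_one
      have := hmono ht (right_mem_Icc.2 zero_le_one) ht.2
      nlinarith [ht.1]
    | succ k ih =>
      intro t ht
      rw [pow_succ, ← div_div]
      rcases le_total t (1 / 2) with h | h
      · have hF := ih (2 * t) ⟨by linarith [ht.1], by linarith⟩
        have hm := hmid 0 (2 * t) le_rfl (by linarith [ht.1]) (by linarith)
        rw [show (0 + 2 * t) / 2 = t by ring] at hm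
        linarith
      · have hF := ih (2 * t - 1) ⟨by linarith, by linarith [ht.2]⟩
        have hm := hmid (2 * t - 1) 1 (by linarith) (by linarith [ht.2]) le_rfl
        rw [show (2 * t - 1 + 1) / 2 = t by ring] at hm
        linarith
  have hgap : Tendsto (fun k : ℕ => (F 1 - F 0) / 2 ^ k) atTop (𝓝 0) :=
    tendsto_const_nhds.div_atTop (tendsto_pow_atTop_atTop_of_one_lt one_lt_two)
  exact ge_of_tendsto' (by simpa using tendsto_const_nhds.add hgap) fun k => approx k t ht

lemma ordConnected_memI (a : EReal) : OrdConnected {x | MemI a x} :=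
  ⟨fun _ hx _ hy _ hz =>
    ⟨hx.1.trans_le (EReal.coe_le_coe_iff.2 hz.1), (EReal.coe_le_coe_iff.2 hz.2).trans_lt hy.2⟩⟩

section LineBlock

variable {n : ℕ}

lemma EntriesIn.lineMap {a : EReal} {A B : Matrix (Fin n) (Fin n) ℝ} (hA : EntriesIn a A)
    (hB : EntriesIn a B) {t : ℝ} (ht : t ∈ Icc (0 : ℝ) 1) :
    EntriesIn a (AffineMap.lineMap B A t) := fun i j => by
  simpa [AffineMap.lineMap_apply_module] using
    (ordConnected_memI a).convex.lineMap_mem (hB i j) (hA i j) ht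

def quadAlong (f : ℝ → ℝ) (A B : Matrix (Fin n) (Fin n) ℝ) (v : Fin n → ℝ) (t : ℝ) : ℝ :=
  v ⬝ᵥ ((AffineMap.lineMap B A t : Matrix (Fin n) (Fin n) ℝ).map f *ᵥ v)

lemma quadAlong_zero (f : ℝ → ℝ) (A B : Matrix (Fin n) (Fin n) ℝ) (v : Fin n → ℝ) :
    quadAlong f A B v 0 = v ⬝ᵥ (B.map f *ᵥ v) := by
  rw [quadAlong, AffineMap.lineMap_apply_zero]

lemma quadAlong_one (f : ℝ → ℝ) (A B : Matrix (Fin n) (Fin n) ℝ) (v : Fin n → ℝ) :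
    quadAlong f A B v 1 = v ⬝ᵥ (A.map f *ᵥ v) := by
  rw [quadAlong, AffineMap.lineMap_apply_one]

/-- The `2n × 2n` matrix whose `(i, j)` block is `lineMap B A (P i j)`. -/
def lineBlock (A B : Matrix (Fin n) (Fin n) ℝ) (P : Matrix (Fin 2) (Fin 2) ℝ) :
    Matrix (Fin (2 * n)) (Fin (2 * n)) ℝ :=
  (of (fun _ _ => 1) ⊗ₖ B + P ⊗ₖ (A - B)).submatrix finProdFinEquiv.symm finProdFinEquiv.symm

def blockVec (c : Fin 2 → ℝ) (v : Fin n → ℝ) : Fin (2 * n) → ℝ :=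
  fun x => c (finProdFinEquiv.symm x).1 * v (finProdFinEquiv.symm x).2

section
variable (A B : Matrix (Fin n) (Fin n) ℝ) (P Q : Matrix (Fin 2) (Fin 2) ℝ)

lemma lineBlock_apply (i j : Fin 2) (k l : Fin n) :
    lineBlock A B P (finProdFinEquiv (i, k)) (finProdFinEquiv (j, l)) =
      AffineMap.lineMap B A (P i j) k l := by
  simp only [lineBlock, submatrix_apply, Equiv.symm_apply_apply, Matrix.add_apply,
    kroneckerMap_apply, of_apply, AffineMap.lineMap_apply_module', Matrix.smul_apply,
    Matrix.sub_apply, smul_eq_mul]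
  ring

lemma lineBlock_sub_lineBlock :
    lineBlock A B P - lineBlock A B Q =
      ((P - Q) ⊗ₖ (A - B)).submatrix finProdFinEquiv.symm finProdFinEquiv.symm := by
  ext x y
  simp [lineBlock, sub_mul]

lemma blockVec_dotProduct_map_lineBlock_mulVec (f : ℝ → ℝ) (c : Fin 2 → ℝ) (v : Fin n → ℝ) :
    blockVec c v ⬝ᵥ ((lineBlock A B P).map f *ᵥ blockVec c v) =
      ∑ i, ∑ j, c i * c j * quadAlong f A B v (P i j) := by
  simp only [dotProduct, mulVec, ← finProdFinEquiv.sum_comp, Fintype.sum_prod_type, map_apply,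
    lineBlock_apply, blockVec, Equiv.symm_apply_apply, quadAlong, Finset.mul_sum]
  refine Finset.sum_congr rfl fun i _ => Finset.sum_comm.trans (Finset.sum_congr rfl fun j _ => ?_)
  refine Finset.sum_congr rfl fun k _ => Finset.sum_congr rfl fun l _ => ?_
  ring

end

variable {a : EReal} {f : ℝ → ℝ} {A B : Matrix (Fin n) (Fin n) ℝ}
  {P Q : Matrix (Fin 2) (Fin 2) ℝ}

lemma entriesIn_lineBlock (hA : EntriesIn a A) (hB : EntriesIn a B)
    (hP : ∀ i j, P i j ∈ Icc (0 : ℝ) 1) : EntriesIn a (lineBlock A B P) := by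
  intro x y
  obtain ⟨⟨i, k⟩, rfl⟩ := finProdFinEquiv.surjective x
  obtain ⟨⟨j, l⟩, rfl⟩ := finProdFinEquiv.surjective y
  rw [lineBlock_apply]
  exact hA.lineMap hB (hP i j) k l

lemma posSemidef_lineBlock (hB : B.PosSemidef) (hAB : (A - B).PosSemidef) (hP : P.PosSemidef) :
    (lineBlock A B P).PosSemidef := by
  have hJ : (of fun _ _ => 1 : Matrix (Fin 2) (Fin 2) ℝ).PosSemidef := by
    simpa [vecMulVec] using posSemidef_vecMulVec_self_star (1 : Fin 2 → ℝ)
  exact ((hJ.kronecker hB).add (hP.kronecker hAB)).submatrix _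

lemma SPos.sum_nonneg (hf : SPos a f (2 * n)) (hA : EntriesIn a A) (hB : EntriesIn a B)
    (hBpsd : B.PosSemidef) (hAB : (A - B).PosSemidef) (hP : P.PosSemidef)
    (hP01 : ∀ i j, P i j ∈ Icc (0 : ℝ) 1) (c : Fin 2 → ℝ) (v : Fin n → ℝ) :
    0 ≤ ∑ i, ∑ j, c i * c j * quadAlong f A B v (P i j) := by
  rw [← blockVec_dotProduct_map_lineBlock_mulVec]
  exact (hf _ (entriesIn_lineBlock hA hB hP01)
    (posSemidef_lineBlock hBpsd hAB hP)).dotProduct_mulVec_nonneg_real _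

lemma SMono.sum_le (hf : SMono a f (2 * n)) (hA : EntriesIn a A) (hB : EntriesIn a B)
    (hBpsd : B.PosSemidef) (hAB : (A - B).PosSemidef) (hQ : Q.PosSemidef)
    (hPQ : (P - Q).PosSemidef) (hP01 : ∀ i j, P i j ∈ Icc (0 : ℝ) 1)
    (hQ01 : ∀ i j, Q i j ∈ Icc (0 : ℝ) 1) (c : Fin 2 → ℝ) (v : Fin n → ℝ) :
    ∑ i, ∑ j, c i * c j * quadAlong f A B v (Q i j) ≤
      ∑ i, ∑ j, c i * c j * quadAlong f A B v (P i j) := by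
  have hQblock := posSemidef_lineBlock hBpsd hAB hQ
  have hsub : (lineBlock A B P - lineBlock A B Q).PosSemidef := by
    rw [lineBlock_sub_lineBlock]
    exact (hPQ.kronecker hAB).submatrix _
  have hPblock : (lineBlock A B P).PosSemidef := by simpa using hQblock.add hsub
  have key := (hf _ _ (isHermitian_iff_isSymm.1 hPblock.isHermitian)
    (isHermitian_iff_isSymm.1 hQblock.isHermitian) (entriesIn_lineBlock hA hB hP01)
    (entriesIn_lineBlock hA hB hQ01) hQblock hsub).dotProduct_mulVec_nonneg_real (blockVec c v)
  rw [sub_mulVec, dotProduct_sub, blockVec_dotProduct_map_lineBlock_mulVec,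
    blockVec_dotProduct_map_lineBlock_mulVec] at key
  linarith

lemma SPos.quadAlong_zero_le_one (hf : SPos a f (2 * n)) (hA : EntriesIn a A)
    (hB : EntriesIn a B) (hBpsd : B.PosSemidef) (hAB : (A - B).PosSemidef) (v : Fin n → ℝ) :
    quadAlong f A B v 0 ≤ quadAlong f A B v 1 := by
  have := hf.sum_nonneg hA hB hBpsd hAB (P := !![1, 0; 0, 0])
    (posSemidef_fin_two zero_le_one le_rfl (by norm_num)) (by simp [Fin.forall_fin_two])
    ![1, -1] v
  simp only [Fin.sum_univ_two, of_apply, cons_val', cons_val_zero, cons_val_one,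
    cons_val_fin_one] at this
  linarith

lemma SMono.monotoneOn_quadAlong (hf : SMono a f (2 * n)) (hA : EntriesIn a A)
    (hB : EntriesIn a B) (hBpsd : B.PosSemidef) (hAB : (A - B).PosSemidef) (v : Fin n → ℝ) :
    MonotoneOn (quadAlong f A B v) (Icc 0 1) := by
  intro s hs u hu hsu
  have hPQ : !![u, s; s, s] - !![s, s; s, s] = !![u - s, 0; 0, 0] := by
    ext i j; fin_cases i <;> fin_cases j <;> simp
  have := hf.sum_le hA hB hBpsd hAB (P := !![u, s; s, s]) (Q := !![s, s; s, s])
    (posSemidef_fin_two hs.1 hs.1 (by nlinarith))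
    (hPQ ▸ posSemidef_fin_two (sub_nonneg.2 hsu) le_rfl (by norm_num))
    (by simpa [Fin.forall_fin_two] using ⟨hu, hs⟩) (by simpa [Fin.forall_fin_two] using hs)
    ![1, 0] v
  simpa [Fin.sum_univ_two] using this

lemma SMono.quadAlong_midpoint_le (hf : SMono a f (2 * n)) (hA : EntriesIn a A)
    (hB : EntriesIn a B) (hBpsd : B.PosSemidef) (hAB : (A - B).PosSemidef) (v : Fin n → ℝ)
    {s u : ℝ} (hs : 0 ≤ s) (hsu : s ≤ u) (hu : u ≤ 1) :
    2 * quadAlong f A B v ((s + u) / 2) ≤ quadAlong f A B v s + quadAlong f A B v u := by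
  set m := (s + u) / 2 with hm
  have hsm : s ≤ m := by linarith
  have hmu : m ≤ u := by linarith
  have hs01 : s ∈ Icc (0 : ℝ) 1 := ⟨hs, by linarith⟩
  have hm01 : m ∈ Icc (0 : ℝ) 1 := ⟨by linarith, by linarith⟩
  have hPQ : !![u, m; m, m] - !![m, s; s, s] = !![u - m, m - s; m - s, m - s] := by
    ext i j; fin_cases i <;> fin_cases j <;> simp
  have := hf.sum_le hA hB hBpsd hAB (P := !![u, m; m, m]) (Q := !![m, s; s, s])
    (posSemidef_fin_two (by linarith) hs (by nlinarith))
    (hPQ ▸ posSemidef_fin_two (by linarith) (by linarith)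
      (by rw [show u - m = m - s by linarith, sq]))
    (by simpa [Fin.forall_fin_two] using ⟨⟨by linarith, hu⟩, hm01⟩)
    (by simpa [Fin.forall_fin_two] using ⟨hm01, hs01⟩) ![1, -1] v
  simp only [Fin.sum_univ_two, of_apply, cons_val', cons_val_zero, cons_val_one,
    cons_val_fin_one] at this
  linarith

end LineBlock

theorem stmt_7_general (a : EReal) (n : ℕ) (f : ℝ → ℝ) :
    (SPos a f (2 * n) → SMono a f n) ∧ (SMono a f (2 * n) → SConv a f n) := by
  constructor
  · intro hf A B hA hB hAe hBe hBpsd hAB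
    refine posSemidef_of_isSymm_of_dotProduct_mulVec_nonneg ((hA.map f).sub (hB.map f))
      fun v => ?_
    have := hf.quadAlong_zero_le_one hAe hBe hBpsd hAB v
    rw [quadAlong_zero, quadAlong_one] at this
    rw [sub_mulVec, dotProduct_sub]
    linarith
  · intro hf A B hA hB hAe hBe hBpsd hAB t ht0 ht1
    refine posSemidef_of_isSymm_of_dotProduct_mulVec_nonneg
      ((((hA.map f).smul t).add ((hB.map f).smul (1 - t))).sub
        (((hA.smul t).add (hB.smul (1 - t))).map f)) fun v => ?_
    have := (hf.monotoneOn_quadAlong hAe hBe hBpsd hAB v).le_chord_of_midpoint_convex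
      (fun s u hs hsu hu => hf.quadAlong_midpoint_le hAe hBe hBpsd hAB v hs hsu hu) ⟨ht0, ht1⟩
    rw [quadAlong_zero, quadAlong_one, quadAlong, AffineMap.lineMap_apply_module, add_comm]
      at this
    simp only [sub_mulVec, add_mulVec, smul_mulVec, dotProduct_sub, dotProduct_add,
      dotProduct_smul, smul_eq_mul]
    linarith

/-- Proposition 3.1: S-positivity of order `2n` implies S-monotonicity of order `n`, and
S-monotonicity of order `2n` implies S-convexity of order `n`. -/
theorem stmt_7 (a : EReal) (ha : 0 < a) (n : ℕ) (hn : 1 ≤ n) (f : ℝ → ℝ) :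
    (SPos a f (2 * n) → SMono a f n) ∧ (SMono a f (2 * n) → SConv a f n) :=
  stmt_7_general a n f
end

section
/- Let 0 < α ≤ ∞ and let f be a real function on (-α,α). Write f₀(x) := (f(x)+f(-x))/2 and f₁(x) := (f(x)-f(-x))/2 for the even and odd parts of f. Then f is S-convex if and only if both f₀ and f₁ are S-convex. -/
open Matrix

/-!
The convexity defect `t • f[A] + (1 - t) • f[B] - f[t • A + (1 - t) • B]` is linear in `f`, so
S-convexity of `f₀` and `f₁` gives that of `f = f₀ + f₁`. Conversely, apply S-convexity of `f`
in order `2n` to the doubled matrices `[[A, -A], [-A, A]] ≥ [[B, -B], [-B, B]] ≥ 0`. The defect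
there is `[[D, D'], [D', D]]`, where `D` and `D'` are the defects of `f` and of `x ↦ f (-x)` at
`A, B`; compressing this positive semidefinite block matrix by `[1; ±1]` gives `D ± D' ≥ 0`, and
`D ± D'` are the defects of `2 f₀` and `2 f₁`.
-/

open scoped ComplexOrder

namespace Matrix.PosSemidef

variable {n R 𝕜 : Type*} [Fintype n]

theorem fromBlocks_neg [Ring R] [PartialOrder R] [StarRing R] {B : Matrix n n R}
    (hB : B.PosSemidef) : (fromBlocks B (-B) (-B) B).PosSemidef := by
  classical
  have h := hB.conjTranspose_mul_mul_same (fromCols (1 : Matrix n n R) (-1 : Matrix n n R))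
  rw [conjTranspose_fromCols_eq_fromRows_conjTranspose, fromRows_mul, fromRows_mul_fromCols]
    at h
  simpa using h

variable [RCLike 𝕜] {P Q : Matrix n n 𝕜}

theorem add_of_fromBlocks (h : (fromBlocks P Q Q P).PosSemidef) : (P + Q).PosSemidef := by
  classical
  have h2 := (h.conjTranspose_mul_mul_same (fromRows (1 : Matrix n n 𝕜) 1)).smul
    (show (0 : 𝕜) ≤ 2⁻¹ by positivity)
  rw [conjTranspose_fromRows_eq_fromCols_conjTranspose, Matrix.mul_assoc,
    fromBlocks_mul_fromRows, fromCols_mul_fromRows] at h2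
  convert h2 using 1
  simp only [conjTranspose_one, Matrix.one_mul, Matrix.mul_one]
  module

theorem sub_of_fromBlocks (h : (fromBlocks P Q Q P).PosSemidef) : (P - Q).PosSemidef := by
  classical
  have h2 := (h.conjTranspose_mul_mul_same (fromRows (1 : Matrix n n 𝕜) (-1))).smul
    (show (0 : 𝕜) ≤ 2⁻¹ by positivity)
  rw [conjTranspose_fromRows_eq_fromCols_conjTranspose, Matrix.mul_assoc,
    fromBlocks_mul_fromRows, fromCols_mul_fromRows] at h2
  convert h2 using 1
  simp only [conjTranspose_one, conjTranspose_neg, Matrix.one_mul, Matrix.mul_one,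
    Matrix.mul_neg, Matrix.neg_mul]
  module

end Matrix.PosSemidef

def convexityDefect {m : Type*} (f : ℝ → ℝ) (t : ℝ) (A B : Matrix m m ℝ) : Matrix m m ℝ :=
  t • A.map f + (1 - t) • B.map f - (t • A + (1 - t) • B).map f

section convexityDefect

variable {m m' : Type*} (f g : ℝ → ℝ) (t : ℝ) (A B : Matrix m m ℝ)

theorem convexityDefect_add :
    convexityDefect (fun x => f x + g x) t A B =
      convexityDefect f t A B + convexityDefect g t A B := by
  ext i j
  simp only [convexityDefect, Matrix.sub_apply, Matrix.add_apply, Matrix.smul_apply, map_apply,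
    smul_eq_mul]
  ring

theorem convexityDefect_evenPart :
    convexityDefect (fun x => (f x + f (-x)) / 2) t A B =
      (2⁻¹ : ℝ) • (convexityDefect f t A B + convexityDefect (fun x => f (-x)) t A B) := by
  ext i j
  simp only [convexityDefect, Matrix.sub_apply, Matrix.add_apply, Matrix.smul_apply, map_apply,
    smul_eq_mul]
  ring

theorem convexityDefect_oddPart :
    convexityDefect (fun x => (f x - f (-x)) / 2) t A B =
      (2⁻¹ : ℝ) • (convexityDefect f t A B - convexityDefect (fun x => f (-x)) t A B) := by
  ext i j
  simp only [convexityDefect, Matrix.sub_apply, Matrix.add_apply, Matrix.smul_apply, map_apply,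
    smul_eq_mul]
  ring

theorem convexityDefect_submatrix (e : m' → m) :
    convexityDefect f t (A.submatrix e e) (B.submatrix e e) =
      (convexityDefect f t A B).submatrix e e := by
  ext i j
  simp [convexityDefect]

theorem convexityDefect_fromBlocks_neg :
    convexityDefect f t (fromBlocks A (-A) (-A) A) (fromBlocks B (-B) (-B) B) =
      fromBlocks (convexityDefect f t A B) (convexityDefect (fun x => f (-x)) t A B)
        (convexityDefect (fun x => f (-x)) t A B) (convexityDefect f t A B) := by
  ext (i | i) (j | j) <;> simp [convexityDefect] <;> ring_nf

end convexityDefect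

/-- `SConv` for matrices indexed by an arbitrary finite type, so that block matrices indexed by
`m ⊕ m` can be used without reindexing by `Fin (n + n)`. -/
def SConvOn (a : EReal) (f : ℝ → ℝ) (m : Type*) [Fintype m] : Prop :=
  ∀ A B : Matrix m m ℝ, A.IsSymm → B.IsSymm →
    (∀ i j, MemI a (A i j)) → (∀ i j, MemI a (B i j)) →
    B.PosSemidef → (A - B).PosSemidef →
    ∀ t : ℝ, 0 ≤ t → t ≤ 1 → (convexityDefect f t A B).PosSemidef

theorem sConv_iff_sConvOn {a : EReal} {f : ℝ → ℝ} {n : ℕ} : SConv a f n ↔ SConvOn a f (Fin n) :=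
  Iff.rfl

theorem MemI.neg {a : EReal} {x : ℝ} (h : MemI a x) : MemI a (-x) :=
  ⟨by rw [EReal.coe_neg]; exact EReal.neg_lt_neg_iff.mpr h.2,
    by rw [EReal.coe_neg]; exact EReal.neg_lt_of_neg_lt h.1⟩

namespace SConvOn

variable {a : EReal} {f g : ℝ → ℝ} {m m' : Type*} [Fintype m] [Fintype m']

theorem add (hf : SConvOn a f m) (hg : SConvOn a g m) : SConvOn a (fun x => f x + g x) m :=
  fun A B hA hB hAa hBa hBpos hABpos t ht₀ ht₁ => by
    rw [convexityDefect_add]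
    exact (hf A B hA hB hAa hBa hBpos hABpos t ht₀ ht₁).add
      (hg A B hA hB hAa hBa hBpos hABpos t ht₀ ht₁)

theorem of_equiv (e : m ≃ m') (h : SConvOn a f m') : SConvOn a f m :=
  fun A B hA hB hAa hBa hBpos hABpos t ht₀ ht₁ => by
    have := h (A.submatrix e.symm e.symm) (B.submatrix e.symm e.symm) (hA.submatrix _)
      (hB.submatrix _) (fun i j => hAa _ _) (fun i j => hBa _ _) (hBpos.submatrix _)
      (hABpos.submatrix _) t ht₀ ht₁
    rwa [convexityDefect_submatrix, posSemidef_submatrix_equiv] at this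

theorem posSemidef_fromBlocks (h : SConvOn a f (m ⊕ m)) {A B : Matrix m m ℝ}
    (hA : A.IsSymm) (hB : B.IsSymm)
    (hAa : ∀ i j, MemI a (A i j)) (hBa : ∀ i j, MemI a (B i j))
    (hBpos : B.PosSemidef) (hABpos : (A - B).PosSemidef) {t : ℝ} (ht₀ : 0 ≤ t) (ht₁ : t ≤ 1) :
    (fromBlocks (convexityDefect f t A B) (convexityDefect (fun x => f (-x)) t A B)
      (convexityDefect (fun x => f (-x)) t A B) (convexityDefect f t A B)).PosSemidef := by
  have hsymm {C : Matrix m m ℝ} (hC : C.IsSymm) : (fromBlocks C (-C) (-C) C).IsSymm := by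
    rw [IsSymm, fromBlocks_transpose, transpose_neg, hC.eq]
  have hmem {C : Matrix m m ℝ} (hC : ∀ i j, MemI a (C i j)) :
      ∀ i j, MemI a (fromBlocks C (-C) (-C) C i j) := by
    rintro (i | i) (j | j)
    exacts [hC i j, (hC i j).neg, (hC i j).neg, hC i j]
  have hsub : fromBlocks A (-A) (-A) A - fromBlocks B (-B) (-B) B =
      fromBlocks (A - B) (-(A - B)) (-(A - B)) (A - B) := by
    ext (i | i) (j | j) <;> simp <;> abel
  rw [← convexityDefect_fromBlocks_neg]
  refine h _ _ (hsymm hA) (hsymm hB) (hmem hAa) (hmem hBa) hBpos.fromBlocks_neg ?_ t ht₀ ht₁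
  rw [hsub]
  exact hABpos.fromBlocks_neg

theorem evenPart (h : SConvOn a f (m ⊕ m)) : SConvOn a (fun x => (f x + f (-x)) / 2) m :=
  fun A B hA hB hAa hBa hBpos hABpos t ht₀ ht₁ => by
    rw [convexityDefect_evenPart]
    exact (h.posSemidef_fromBlocks hA hB hAa hBa hBpos hABpos ht₀ ht₁).add_of_fromBlocks.smul
      (by norm_num)

theorem oddPart (h : SConvOn a f (m ⊕ m)) : SConvOn a (fun x => (f x - f (-x)) / 2) m :=
  fun A B hA hB hAa hBa hBpos hABpos t ht₀ ht₁ => by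
    rw [convexityDefect_oddPart]
    exact (h.posSemidef_fromBlocks hA hB hAa hBa hBpos hABpos ht₀ ht₁).sub_of_fromBlocks.smul
      (by norm_num)

end SConvOn

theorem stmt_14_general (a : EReal) (f : ℝ → ℝ) :
    (∀ n : ℕ, SConv a f n) ↔
      ((∀ n : ℕ, SConv a (fun x => (f x + f (-x)) / 2) n) ∧
       (∀ n : ℕ, SConv a (fun x => (f x - f (-x)) / 2) n)) := by
  simp only [sConv_iff_sConvOn]
  refine ⟨fun h => ⟨fun n => ((h (n + n)).of_equiv finSumFinEquiv).evenPart,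
    fun n => ((h (n + n)).of_equiv finSumFinEquiv).oddPart⟩, fun ⟨h₀, h₁⟩ n => ?_⟩
  convert (h₀ n).add (h₁ n) using 2 with x
  ring

/-- Lemma 4.2: `f` is S-convex on `(-α, α)` iff both its even part
`f₀(x) = (f(x) + f(-x))/2` and its odd part `f₁(x) = (f(x) - f(-x))/2` are S-convex. -/
theorem stmt_14 (a : EReal) (ha : 0 < a) (f : ℝ → ℝ) :
    (∀ n : ℕ, SConv a f n) ↔
      ((∀ n : ℕ, SConv a (fun x => (f x + f (-x)) / 2) n) ∧
       (∀ n : ℕ, SConv a (fun x => (f x - f (-x)) / 2) n)) :=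
  stmt_14_general a f
end

section
/- Let 0 < α ≤ ∞ and let f be a continuous real function on [0,α) that is continuously differentiable on (0,α). If f(0) ≥ 0 and the derivative f' is convex on (0,α), then the function x ↦ f(x)/x is convex on (0,α). -/
open Matrix

/-! Write `f x / x = (f x - f 0) / x + f 0 / x`; the second term is convex because `f 0 ≥ 0`.
For `w` in the domain, the slope `(f x - f w) / (x - w)` is the mean `∫₀¹ f' (w + (x - w) s) ds`,
which is convex in `x` because `f'` is. Letting `w → 0⁺`, the slope from `0` is a pointwise limit
of convex functions, hence convex; this avoids integrating `f'` up to `0`. -/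

open Set Filter Topology

theorem convexOn_of_tendsto {E ι : Type*} [AddCommGroup E] [Module ℝ E] {l : Filter ι} [l.NeBot]
    {S : Set E} {F : ι → E → ℝ} {g : E → ℝ} (hS : Convex ℝ S)
    (hF : ∀ᶠ i in l, ConvexOn ℝ S (F i)) (hlim : ∀ x ∈ S, Tendsto (fun i => F i x) l (𝓝 (g x))) :
    ConvexOn ℝ S g :=
  ⟨hS, fun x hx y hy p q hp hq hpq =>
    le_of_tendsto_of_tendsto (hlim _ (hS hx hy hp hq hpq))
      (((hlim x hx).const_smul p).add ((hlim y hy).const_smul q))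
      (hF.mono fun _ hi => hi.2 hx hy hp hq hpq)⟩

theorem intervalIntegrable_comp_segment {S : Set ℝ} (hS : Convex ℝ S) {g : ℝ → ℝ}
    (hg : ContinuousOn g S) {w x : ℝ} (hw : w ∈ S) (hx : x ∈ S) :
    IntervalIntegrable (fun s => g (w + (x - w) * s)) MeasureTheory.volume 0 1 := by
  refine (hg.comp (by fun_prop) fun s hs => ?_).intervalIntegrable
  rw [uIcc_of_le zero_le_one] at hs
  simpa [mul_comm] using hS.add_smul_sub_mem hw hx hs

theorem convexOn_integral_comp_segment {S : Set ℝ} {g : ℝ → ℝ} (hg : ConvexOn ℝ S g)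
    (hgc : ContinuousOn g S) {w : ℝ} (hw : w ∈ S) :
    ConvexOn ℝ S (fun x => ∫ s in (0 : ℝ)..1, g (w + (x - w) * s)) := by
  refine ⟨hg.1, fun x hx y hy p q hp hq hpq => ?_⟩
  have hint : ∀ {z}, z ∈ S → _ := fun hz => intervalIntegrable_comp_segment hg.1 hgc hw hz
  simp only [smul_eq_mul]
  rw [← intervalIntegral.integral_const_mul, ← intervalIntegral.integral_const_mul,
    ← intervalIntegral.integral_add ((hint hx).const_mul p) ((hint hy).const_mul q)]
  refine intervalIntegral.integral_mono_on zero_le_one (hint (hg.1 hx hy hp hq hpq))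
    (((hint hx).const_mul p).add ((hint hy).const_mul q)) fun s hs => ?_
  have hmem : ∀ {z}, z ∈ S → w + (z - w) * s ∈ S := fun hz => by
    simpa [mul_comm] using hg.1.add_smul_sub_mem hw hz hs
  have hcomb : p * (w + (x - w) * s) + q * (w + (y - w) * s) = w + (p * x + q * y - w) * s := by
    linear_combination (w - w * s) * hpq
  simpa only [smul_eq_mul, hcomb] using hg.2 (hmem hx) (hmem hy) hp hq hpq

theorem slope_eq_integral_deriv {S : Set ℝ} (hS : Convex ℝ S) {f : ℝ → ℝ}
    (hdiff : ∀ x ∈ S, DifferentiableAt ℝ f x) (hderiv : ContinuousOn (deriv f) S)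
    {w x : ℝ} (hw : w ∈ S) (hx : x ∈ S) (hwx : w ≠ x) :
    slope f w x = ∫ s in (0 : ℝ)..1, deriv f (w + (x - w) * s) := by
  have hsub : uIcc w x ⊆ S := hS.ordConnected.uIcc_subset hw hx
  have hxw : x - w ≠ 0 := sub_ne_zero.2 hwx.symm
  rw [slope_def_field, div_eq_iff hxw, mul_comm, ← smul_eq_mul,
    intervalIntegral.smul_integral_comp_add_mul, mul_zero, mul_one, add_zero, add_sub_cancel,
    intervalIntegral.integral_deriv_eq_sub (fun y hy => hdiff y (hsub hy))
      ((hderiv.mono hsub).intervalIntegrable)]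

theorem convexOn_slope_of_convexOn_deriv {S : Set ℝ} {f : ℝ → ℝ} {c : ℝ}
    (hdiff : ∀ x ∈ S, DifferentiableAt ℝ f x) (hderiv : ContinuousOn (deriv f) S)
    (hconv : ConvexOn ℝ S (deriv f)) (hc : c ∉ S) [(𝓝[S] c).NeBot]
    (hfc : Tendsto f (𝓝[S] c) (𝓝 (f c))) :
    ConvexOn ℝ S (slope f c) := by
  refine convexOn_of_tendsto hconv.1 (l := 𝓝[S] c)
    (eventually_mem_nhdsWithin.mono fun w hw => convexOn_integral_comp_segment hconv hderiv hw)
    fun x hx => ?_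
  have hxc : x - c ≠ 0 := sub_ne_zero.2 fun h => hc (h ▸ hx)
  have hlim : Tendsto (slope f · x) (𝓝[S] c) (𝓝 (slope f c x)) := by
    simp only [slope_def_field]
    exact (tendsto_const_nhds.sub hfc).div
      (tendsto_const_nhds.sub (tendsto_id.mono_left nhdsWithin_le_nhds)) hxc
  refine hlim.congr' ?_
  filter_upwards [eventually_mem_nhdsWithin,
    nhdsWithin_le_nhds (eventually_ne_nhds fun h => hc (h ▸ hx))] with w hw hwx
  exact slope_eq_integral_deriv hconv.1 hdiff hderiv hw hx hwx

/-- Lemma 6.2: let `f` be continuous on `[0, α)` and continuously differentiable on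
`(0, α)`. If `f(0) ≥ 0` and `f'` is convex on `(0, α)`, then `x ↦ f(x)/x` is convex on
`(0, α)`. -/
theorem stmt_17 (a : EReal) (ha : 0 < a) (f : ℝ → ℝ)
    (hcont : ContinuousOn f {x : ℝ | 0 ≤ x ∧ (x : EReal) < a})
    (hdiff : ∀ x, MemP a x → DifferentiableAt ℝ f x)
    (hderiv : ContinuousOn (deriv f) {x | MemP a x})
    (h0 : 0 ≤ f 0)
    (hconv : ConvexOn ℝ {x | MemP a x} (deriv f)) :
    ConvexOn ℝ {x | MemP a x} (fun x => f x / x) := by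
  set D : Set ℝ := {x | MemP a x}
  have hD : Convex ℝ D := Set.OrdConnected.convex ⟨fun x hx y hy z hz =>
    ⟨hx.1.trans_le hz.1, (EReal.coe_le_coe_iff.2 hz.2).trans_lt hy.2⟩⟩
  have hDpos : D ⊆ Ioi 0 := fun x hx => hx.1
  obtain ⟨r, hr0, hra⟩ := EReal.exists_between_coe_real ha
  have hrD : Ioo 0 r ⊆ D := fun x hx =>
    ⟨hx.1, (EReal.coe_lt_coe_iff.2 hx.2).trans hra⟩
  have : (𝓝[D] (0 : ℝ)).NeBot :=
    (left_nhdsWithin_Ioo_neBot (EReal.coe_pos.1 hr0)).mono (nhdsWithin_mono 0 hrD)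
  have hf0 : Tendsto f (𝓝[D] 0) (𝓝 (f 0)) :=
    (hcont 0 ⟨le_rfl, by exact_mod_cast ha⟩).tendsto.mono_left
      (nhdsWithin_mono 0 fun x hx => ⟨hx.1.le, hx.2⟩)
  have hslope : ConvexOn ℝ D (slope f 0) :=
    convexOn_slope_of_convexOn_deriv hdiff hderiv hconv (fun h => lt_irrefl _ h.1) hf0
  have hinv : ConvexOn ℝ D (fun x : ℝ => f 0 • x ^ (-1 : ℤ)) :=
    ((convexOn_zpow (-1)).subset hDpos hD).smul h0
  have hsplit : (fun x => f x / x) = slope f 0 + fun x : ℝ => f 0 • x ^ (-1 : ℤ) := by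
    ext x
    simp only [Pi.add_apply, slope_def_field, sub_zero, _root_.zpow_neg_one, smul_eq_mul]
    ring
  exact hsplit ▸ hslope.add hinv
end
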